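/- arXiv:math/9806067 — 6 statements merged into one kernel-verified Lean document; each statement's English description precedes it below -/
import Mathlib

section
/- If f : Z → Y and g : Y → X are dominant quasi-compact quasi-separated morphisms of schemes such that both f and g are seminormal morphisms, then the composition g ∘ f : Z → X is a seminormal morphism. -/
/-!
The seminormalization of `g` is also one of `f ≫ g`. Indeed, if an integral quasi-isomorphism
`q : W ⟶ X` admits a factorization of `f ≫ g`, its base change along `g` is an integral
quasi-isomorphism through which `f` factors. Since `f` is seminormal, this base change has a
section, which yields a factorization of `g` through `q`.
-/

open AlgebraicGeometry CategoryTheory CategoryTheory.Limits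

universe u

/-- A morphism of schemes is a universal homeomorphism if every base change of it is a
homeomorphism on underlying topological spaces. -/
def IsUniversalHomeomorphism {X Y : AlgebraicGeometry.Scheme.{u}} (f : X ⟶ Y) : Prop :=
  ∀ (Z : AlgebraicGeometry.Scheme.{u}) (g : Z ⟶ Y), IsHomeomorph (pullback.snd f g).base

/-- A quasi-isomorphism is a universal homeomorphism inducing isomorphisms on all
residue fields. -/
def IsQuasiIsomorphism {X Y : AlgebraicGeometry.Scheme.{u}} (f : X ⟶ Y) : Prop :=
  IsUniversalHomeomorphism f ∧ ∀ x : X, IsIso (f.residueFieldMap x)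

/-- The seminormalization of a dominant morphism `f : Y ⟶ X`: an integral
quasi-isomorphism `sn : Xsn ⟶ X` through which `f` factors, maximal with respect to this
property (any integral quasi-isomorphism `g : Z ⟶ X` factoring `f` receives a unique
morphism from `Xsn` over `X`). -/
structure SeminormalizationData {Y X : AlgebraicGeometry.Scheme.{u}} (f : Y ⟶ X) where
  Xsn : AlgebraicGeometry.Scheme.{u}
  sn : Xsn ⟶ X
  integral : IsIntegralHom sn
  quasiIso : IsQuasiIsomorphism sn
  factors : ∃ h : Y ⟶ Xsn, h ≫ sn = f
  isMax : ∀ (Z : AlgebraicGeometry.Scheme.{u}) (g : Z ⟶ X), IsIntegralHom g →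
    IsQuasiIsomorphism g → (∃ h : Y ⟶ Z, h ≫ g = f) → ∃! u : Xsn ⟶ Z, u ≫ g = sn

/-- A (dominant) morphism `f` is seminormal if its seminormalization `sn_f` is an
isomorphism. -/
def IsSeminormalMorphism {Y X : AlgebraicGeometry.Scheme.{u}} (f : Y ⟶ X) : Prop :=
  ∃ d : SeminormalizationData f, IsIso d.sn

lemma isIso_of_isIso_comp_of_mono {C : Type*} [Category C] {A B D : C} (f : A ⟶ B) (g : B ⟶ D)
    [hfg : IsIso (f ≫ g)] [Mono g] : IsIso f := by
  have : IsSplitEpi g := ⟨⟨inv (f ≫ g) ≫ f, by simp⟩⟩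
  have := isIso_of_mono_of_isSplitEpi g
  exact IsIso.of_isIso_comp_right f g

lemma AlgebraicGeometry.Scheme.Hom.residueFieldMap_surjective {X Y : Scheme.{u}} (f : X ⟶ Y)
    [SurjectiveOnStalks f] (x : X) :
    Function.Surjective (f.residueFieldMap x) := by
  intro z
  obtain ⟨a, rfl⟩ := X.residue_surjective x z
  obtain ⟨b, rfl⟩ := f.stalkMap_surjective x a
  exact ⟨Y.residue _ b, by simpa using congr($(Scheme.residue_residueFieldMap f x) b)⟩

instance isIso_residueFieldMap_of_surjectiveOnStalks {X Y : Scheme.{u}} (f : X ⟶ Y)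
    [SurjectiveOnStalks f] (x : X) : IsIso (f.residueFieldMap x) :=
  (ConcreteCategory.isIso_iff_bijective _).2
    ⟨(f.residueFieldMap x).hom.injective, f.residueFieldMap_surjective x⟩

/- With `t` the image of `p` in the pullback: since `κ(s) ⟶ κ(x)` is an isomorphism, so is
`κ(y) ⟶ κ(x) ⊗[κ(s)] κ(y)`, hence so is the composite `κ(y) ⟶ κ(t) ⟶ κ(p)`; as its second
factor is a map of fields, hence injective, the first one is an isomorphism. -/
open Scheme.Pullback in
lemma AlgebraicGeometry.Scheme.Pullback.Triplet.isIso_residueFieldMap_snd_SpecTensorTo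
    {W X Y : Scheme.{u}} {q : W ⟶ X} {g : Y ⟶ X} (T : Triplet q g)
    [IsIso (q.residueFieldMap T.x)] (p : Spec T.tensor) :
    IsIso ((pullback.snd q g).residueFieldMap (T.SpecTensorTo p)) := by
  have : IsIso T.tensorInr := pushout_inr_iso_of_left_iso _ _
  have hcomp : IsIso ((T.SpecTensorTo ≫ pullback.snd q g).residueFieldMap p) := by
    rw [Scheme.Hom.residueFieldMap_congr T.specTensorTo_snd]
    infer_instance
  rw [Scheme.residueFieldMap_comp] at hcomp
  have : Mono (T.SpecTensorTo.residueFieldMap p) :=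
    ConcreteCategory.mono_of_injective _ (RingHom.injective _)
  exact isIso_of_isIso_comp_of_mono (hfg := hcomp) _ _

open Scheme.Pullback in
lemma isIso_residueFieldMap_pullback_snd {W X Y : Scheme.{u}} (q : W ⟶ X) (g : Y ⟶ X)
    (hq : ∀ w, IsIso (q.residueFieldMap w)) (t : ↑(pullback q g)) :
    IsIso ((pullback.snd q g).residueFieldMap t) := by
  have := hq (Triplet.ofPoint t).x
  rw [← SpecTensorTo_SpecOfPoint t]
  exact (Triplet.ofPoint t).isIso_residueFieldMap_snd_SpecTensorTo _

lemma IsUniversalHomeomorphism.pullback_snd {W X Y : Scheme.{u}} {q : W ⟶ X}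
    (hq : IsUniversalHomeomorphism q) (g : Y ⟶ X) :
    IsUniversalHomeomorphism (pullback.snd q g) := by
  intro T k
  rw [← pullbackLeftPullbackSndIso_hom_snd q g k, Scheme.Hom.comp_base, TopCat.coe_comp]
  exact (hq T (k ≫ g)).comp (Scheme.homeoOfIso (pullbackLeftPullbackSndIso q g k)).isHomeomorph

lemma IsQuasiIsomorphism.pullback_snd {W X Y : Scheme.{u}} {q : W ⟶ X}
    (hq : IsQuasiIsomorphism q) (g : Y ⟶ X) : IsQuasiIsomorphism (pullback.snd q g) :=
  ⟨hq.1.pullback_snd g, isIso_residueFieldMap_pullback_snd q g hq.2⟩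

lemma IsSeminormalMorphism.exists_lift_of_exists_lift_comp {Z Y X W : Scheme.{u}} {f : Z ⟶ Y}
    (hf : IsSeminormalMorphism f) (g : Y ⟶ X) (q : W ⟶ X) (hq : IsIntegralHom q)
    (hq' : IsQuasiIsomorphism q) (hfg : ∃ h : Z ⟶ W, h ≫ q = f ≫ g) :
    ∃ k : Y ⟶ W, k ≫ q = g := by
  obtain ⟨e, he⟩ := hf
  obtain ⟨h, hh⟩ := hfg
  obtain ⟨s, hs, -⟩ := e.isMax _ (pullback.snd q g) inferInstance (hq'.pullback_snd g)
    ⟨pullback.lift h f hh, pullback.lift_snd _ _ _⟩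
  refine ⟨inv e.sn ≫ s ≫ pullback.fst q g, ?_⟩
  rw [Category.assoc, Category.assoc, pullback.condition, reassoc_of% hs, IsIso.inv_hom_id_assoc]

def SeminormalizationData.precomp {Z Y X : Scheme.{u}} {f : Z ⟶ Y} {g : Y ⟶ X}
    (d : SeminormalizationData g) (hf : IsSeminormalMorphism f) :
    SeminormalizationData (f ≫ g) where
  __ := d
  factors := by
    obtain ⟨h, hh⟩ := d.factors
    exact ⟨f ≫ h, by rw [Category.assoc, hh]⟩
  isMax W q hq hq' hfg := d.isMax W q hq hq' (hf.exists_lift_of_exists_lift_comp g q hq hq' hfg)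

theorem isSeminormalMorphism_comp_general {Z Y X : AlgebraicGeometry.Scheme.{u}}
    (f : Z ⟶ Y) (g : Y ⟶ X)
    (hf : IsSeminormalMorphism f) (hg : IsSeminormalMorphism g) :
    IsSeminormalMorphism (f ≫ g) := by
  obtain ⟨d, hd⟩ := hg
  exact ⟨d.precomp hf, hd⟩

/-- If `f : Z ⟶ Y` and `g : Y ⟶ X` are dominant quasi-compact quasi-separated morphisms
of schemes that are both seminormal, then `g ∘ f` is seminormal. -/
theorem isSeminormalMorphism_comp {Z Y X : AlgebraicGeometry.Scheme.{u}}
    (f : Z ⟶ Y) (g : Y ⟶ X)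
    [IsDominant f] [QuasiCompact f] [QuasiSeparated f]
    [IsDominant g] [QuasiCompact g] [QuasiSeparated g]
    (hf : IsSeminormalMorphism f) (hg : IsSeminormalMorphism g) :
    IsSeminormalMorphism (f ≫ g) :=
  isSeminormalMorphism_comp_general f g hf hg
end

section
/- If f : Z → Y and g : Y → X are dominant quasi-compact quasi-separated morphisms of schemes such that g ∘ f is a seminormal morphism, then g is a seminormal morphism. -/
open AlgebraicGeometry CategoryTheory CategoryTheory.Limits

universe u

/-- If `f : Z ⟶ Y` and `g : Y ⟶ X` are dominant quasi-compact quasi-separated morphisms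
of schemes such that `g ∘ f` is seminormal, then `g` is seminormal. -/
theorem isSeminormalMorphism_of_comp {Z Y X : AlgebraicGeometry.Scheme.{u}}
    (f : Z ⟶ Y) (g : Y ⟶ X)
    [IsDominant f] [QuasiCompact f] [QuasiSeparated f]
    [IsDominant g] [QuasiCompact g] [QuasiSeparated g]
    (hfg : IsSeminormalMorphism (f ≫ g)) :
    IsSeminormalMorphism g := by
  obtain ⟨d, hd⟩ := hfg
  refine ⟨⟨X, 𝟙 X, inferInstance, ?_, ⟨g, Category.comp_id g⟩, ?_⟩, ?_⟩
  · constructor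
    · intro W h
      exact (TopCat.homeoOfIso (asIso (pullback.snd (𝟙 X) h).base)).isHomeomorph
    · intro x
      infer_instance
  · rintro W k hint hqi ⟨h, hh⟩
    obtain ⟨u, hu, huniq⟩ := d.isMax W k hint hqi
      ⟨f ≫ h, by rw [Category.assoc, hh]⟩
    refine ⟨inv d.sn ≫ u, show inv d.sn ≫ u ≫ k = 𝟙 X by rw [hu, IsIso.inv_hom_id], ?_⟩
    intro v hv
    have := huniq (d.sn ≫ v) (show (d.sn ≫ v) ≫ k = d.sn by
      rw [Category.assoc, hv, Category.comp_id])
    rw [← this, ← Category.assoc, IsIso.inv_hom_id, Category.id_comp]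
  · exact inferInstanceAs (IsIso (𝟙 X))
end

section
/- Every contraction is a seminormal morphism: if f : Y → X is a dominant morphism of schemes such that the natural map O_X → f_*O_Y is an isomorphism, then the seminormalization of X in Y is X itself, i.e., sn_f : X^{sn,f} → X is an isomorphism. -/
open AlgebraicGeometry CategoryTheory CategoryTheory.Limits

universe u

/-! Write `f = h ≫ sn`. Since `sn` is affine and `f` induces isomorphisms on sections,
`sn^♯ : O_X → sn_* O_{X^sn}` has the retraction `(f^♯)⁻¹ ∘ h^♯`. Over an affine open `U` of `X` the
preimage of `U` is affine, so the retraction is a ring map giving a section of `sn` over `U`; these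
local sections glue to a section `s` of `sn`. Then `sn ≫ s` is an endomorphism of `X^sn` over `X`,
and the uniqueness in the maximality of the seminormalization makes it the identity. -/

namespace AlgebraicGeometry

variable {W X Y : Scheme.{u}}

lemma Scheme.Hom.exists_section_of_app_retraction (g : W ⟶ X) [IsAffineHom g]
    (r : ∀ U : X.Opens, Γ(W, g ⁻¹ᵁ U) ⟶ Γ(X, U)) (hr : ∀ U, g.app U ≫ r U = 𝟙 _)
    (hr_naturality : ∀ {V U : X.Opens} (hVU : V ≤ U), r U ≫ X.presheaf.map (homOfLE hVU).op =
      W.presheaf.map (homOfLE (g.preimage_mono hVU)).op ≫ r V) :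
    ∃ s : X ⟶ W, s ≫ g = 𝟙 X := by
  let piece (U : X.affineOpens) : U.1.toScheme ⟶ W :=
    U.1.toSpecΓ ≫ Spec.map (r U) ≫ (U.2.preimage g).fromSpec
  have piece_comp (U : X.affineOpens) : piece U ≫ g = U.1.ι := by
    rw [Category.assoc, Category.assoc, ← IsAffineOpen.SpecMap_appLE_fromSpec g U.2 _ le_rfl,
      ← Spec.map_comp_assoc, Scheme.Hom.appLE_eq_app, hr, Spec.map_id, Category.id_comp,
      IsAffineOpen.toSpecΓ_fromSpec U.2]
  have piece_compat {V U : X.affineOpens} (hVU : V ≤ U) : X.homOfLE hVU ≫ piece U = piece V := by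
    rw [← Scheme.Opens.toSpecΓ_SpecMap_presheaf_map_assoc, ← Spec.map_comp_assoc, hr_naturality,
      Spec.map_comp_assoc, IsAffineOpen.map_fromSpec]
  refine ⟨X.directedAffineCover.glueMorphismsOfLocallyDirected piece
    (fun hVU => piece_compat (leOfHom hVU)), X.directedAffineCover.hom_ext _ _ fun U => ?_⟩
  exact (X.directedAffineCover.map_glueMorphismsOfLocallyDirected_assoc piece _ U g).trans
    (piece_comp U)

lemma Scheme.Hom.exists_section_of_isIso_comp_app (g : W ⟶ X) [IsAffineHom g] (h : Y ⟶ W)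
    [∀ U : X.Opens, IsIso ((h ≫ g).app U)] : ∃ s : X ⟶ W, s ≫ g = 𝟙 X := by
  refine g.exists_section_of_app_retraction
    (fun U => h.appLE (g ⁻¹ᵁ U) ((h ≫ g) ⁻¹ᵁ U) (le_of_eq rfl) ≫ inv ((h ≫ g).app U))
    (fun U => ?_) (fun {V U} hVU => ?_)
  · rw [← Category.assoc, g.app_eq_appLE, Scheme.Hom.appLE_comp_appLE, Scheme.Hom.appLE_eq_app,
      IsIso.hom_inv_id]
  · rw [← Category.assoc, IsIso.eq_comp_inv, Category.assoc, Category.assoc,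
      Scheme.Hom.naturality, IsIso.inv_hom_id_assoc, Scheme.Hom.appLE_map, Scheme.Hom.map_appLE]

end AlgebraicGeometry

namespace SeminormalizationData

variable {X Y : Scheme.{u}} {f : Y ⟶ X} (d : SeminormalizationData f)

lemma eq_id_of_comp_sn_eq (e : d.Xsn ⟶ d.Xsn) (he : e ≫ d.sn = d.sn) : e = 𝟙 d.Xsn := by
  obtain ⟨_, -, huniq⟩ := d.isMax d.Xsn d.sn d.integral d.quasiIso d.factors
  exact (huniq e he).trans (huniq _ (Category.id_comp _)).symm

lemma isIso_sn_of_section (s : X ⟶ d.Xsn) (hs : s ≫ d.sn = 𝟙 X) : IsIso d.sn :=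
  ⟨s, d.eq_id_of_comp_sn_eq _ (by rw [Category.assoc, hs, Category.comp_id]), hs⟩

end SeminormalizationData

theorem contraction_isSeminormal_general {Y X : AlgebraicGeometry.Scheme.{u}}
    (f : Y ⟶ X)
    (hc : ∀ U : X.Opens, IsIso (f.app U)) :
    ∀ d : SeminormalizationData f, IsIso d.sn := by
  intro d
  obtain ⟨h, hf⟩ := d.factors
  have : ∀ U : X.Opens, IsIso ((h ≫ d.sn).app U) := by
    rwa [hf]
  have : IsIntegralHom d.sn := d.integral
  obtain ⟨s, hs⟩ := d.sn.exists_section_of_isIso_comp_app h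
  exact d.isIso_sn_of_section s hs

/-- Every contraction is seminormal: if `f : Y ⟶ X` is a dominant morphism of schemes
such that the natural map `O_X → f_*O_Y` is an isomorphism (i.e. `Γ(X, U) → Γ(Y, f⁻¹U)`
is an isomorphism for all opens `U`), then the seminormalization of `X` in `Y` is `X`
itself, i.e. `sn_f : X^{sn,f} → X` is an isomorphism. -/
theorem contraction_isSeminormal {Y X : AlgebraicGeometry.Scheme.{u}}
    (f : Y ⟶ X) [IsDominant f]
    (hc : ∀ U : X.Opens, IsIso (f.app U)) :
    ∀ d : SeminormalizationData f, IsIso d.sn :=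
  contraction_isSeminormal_general f hc
end

section
/- Let f : Y → X be a contraction (i.e., O_X → f_*O_Y is an isomorphism) of varieties over a field k. If Y is a seminormal variety, then X is a seminormal variety. -/
open AlgebraicGeometry CategoryTheory

universe u

/-- A reduced commutative ring `A` is seminormal (Swan) if whenever `b, c ∈ A` satisfy
`b³ = c²`, there exists `a ∈ A` with `a² = b` and `a³ = c`. -/
def IsSeminormalRing (A : Type*) [CommRing A] : Prop :=
  ∀ b c : A, b ^ 3 = c ^ 2 → ∃ a : A, a ^ 2 = b ∧ a ^ 3 = c

/-- A (reduced) scheme is seminormal if all of its local rings are seminormal rings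
(seminormality is a local property, and for an affine variety this is equivalent to
seminormality of its coordinate ring, i.e. to the seminormalization
`sn_X : X^{sn} → X` being an isomorphism). -/
def Scheme.IsSeminormal (X : AlgebraicGeometry.Scheme.{u}) : Prop :=
  ∀ x : X, IsSeminormalRing (X.presheaf.stalk x)

/-!
In a reduced ring, `a` is determined by `a ^ 2` and `a ^ 3`, since `(a - a') ^ 3` is a
combination of `a ^ 2 - a' ^ 2` and `a ^ 3 - a' ^ 3`. Hence solutions of `a ^ 2 = b`,
`a ^ 3 = c` found in the stalks of a reduced scheme with seminormal local rings glue, and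
all its rings of sections are seminormal. For a contraction `f : Y → X` the rings of sections
of `X` are those of `Y` over preimages, and a stalk of `X`, being a filtered colimit of rings of
sections, inherits seminormality.
-/

theorem eq_of_sq_eq_of_pow_three_eq {A : Type*} [CommRing A] [IsReduced A] {a a' : A}
    (h2 : a ^ 2 = a' ^ 2) (h3 : a ^ 3 = a' ^ 3) : a = a' := by
  have h : (a - a') ^ 3 = 0 := by linear_combination 4 * h3 - 3 * (a + a') * h2
  exact sub_eq_zero.mp (IsNilpotent.eq_zero ⟨3, h⟩)

theorem IsSeminormalRing.of_ringEquiv {A B : Type*} [CommRing A] [CommRing B]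
    (e : A ≃+* B) (hB : IsSeminormalRing B) : IsSeminormalRing A := by
  intro b c h
  obtain ⟨a, ha2, ha3⟩ := hB (e b) (e c) (by rw [← map_pow, ← map_pow, h])
  exact ⟨e.symm a, by rw [← map_pow, ha2, e.symm_apply_apply],
    by rw [← map_pow, ha3, e.symm_apply_apply]⟩

namespace TopCat.Presheaf

open Opposite TopologicalSpace

section Concrete

variable {C : Type*} [Category.{u} C] [Limits.HasColimits.{u} C] {FC : C → C → Type*}
  {CC : C → Type u} [∀ X Y, FunLike (FC X Y) (CC X) (CC Y)] [ConcreteCategory.{u} C FC]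
  [Limits.PreservesFilteredColimits (forget C)] {X : TopCat.{u}}

theorem exists_forall_germ_eq_of_germ_eq (F : X.Presheaf C) {U V : Opens X} {x : X} (hxU : x ∈ U)
    (hxV : x ∈ V) {s : ToType (F.obj (op U))} {t : ToType (F.obj (op V))}
    (h : F.germ U x hxU s = F.germ V x hxV t) :
    ∃ (W : Opens X) (hWU : W ≤ U) (hWV : W ≤ V), x ∈ W ∧
      ∀ p (hp : p ∈ W), F.germ U p (hWU hp) s = F.germ V p (hWV hp) t := by
  obtain ⟨W, hxW, iU, iV, hW⟩ := F.germ_eq x hxU hxV s t h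
  refine ⟨W, iU.le, iV.le, hxW, fun p hp => ?_⟩
  rw [← F.germ_res_apply iU p hp, hW, F.germ_res_apply]

variable [Limits.HasLimits C]
  [Limits.PreservesLimits (forget C)] [(forget C).ReflectsIsomorphisms]

theorem exists_gluing_of_germ_eq {ι : Type*} (F : Sheaf C X) {U : Opens X} {W : ι → Opens X}
    (iWU : ∀ i, W i ⟶ U) (hcover : U ≤ iSup W) (t : ∀ i, ToType (F.1.obj (op (W i))))
    (ht : ∀ i j p (hi : p ∈ W i) (hj : p ∈ W j),
      F.presheaf.germ (W i) p hi (t i) = F.presheaf.germ (W j) p hj (t j)) :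
    ∃ s : ToType (F.1.obj (op U)), ∀ i p (hp : p ∈ W i),
      F.presheaf.germ U p ((iWU i).le hp) s = F.presheaf.germ (W i) p hp (t i) := by
  have compat : IsCompatible F.1 W t := fun i j =>
    section_ext F _ _ _ fun p hp => by
      simp only [Sheaf.presheaf, germ_res_apply]
      exact ht i j p hp.1 hp.2
  obtain ⟨s, hs, -⟩ := F.existsUnique_gluing' W U iWU hcover t compat
  exact ⟨s, fun i p hp => by rw [← hs i, germ_res_apply]⟩

end Concrete

variable {X : TopCat.{u}}

theorem isSeminormalRing_stalk_of_forall_obj (F : X.Presheaf CommRingCat.{u}) (x : X)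
    (h : ∀ U : Opens X, x ∈ U → IsSeminormalRing (F.obj (op U))) :
    IsSeminormalRing (F.stalk x) := by
  intro b c hbc
  obtain ⟨U, hxU, b, rfl⟩ := F.exists_germ_eq b
  obtain ⟨V, hVU, hxV, c, rfl⟩ := F.exists_le_germ_eq c hxU
  rw [← F.germ_res_apply (homOfLE hVU) x hxV b] at hbc ⊢
  generalize F.map (homOfLE hVU).op b = b at hbc ⊢
  rw [← map_pow, ← map_pow] at hbc
  obtain ⟨W, hxW, iW, iW', hW⟩ := F.germ_eq x hxV hxV _ _ hbc
  rw [Subsingleton.elim iW' iW, map_pow, map_pow] at hW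
  obtain ⟨a, ha2, ha3⟩ := h W hxW _ _ hW
  refine ⟨F.germ W x hxW a, ?_, ?_⟩
  · rw [← map_pow, ha2, F.germ_res_apply]
  · rw [← map_pow, ha3, F.germ_res_apply]

theorem isSeminormalRing_obj_of_forall_stalk (F : X.Sheaf CommRingCat.{u})
    [∀ x, IsReduced (F.presheaf.stalk x)] (h : ∀ x, IsSeminormalRing (F.presheaf.stalk x))
    (U : Opens X) :
    IsSeminormalRing (F.1.obj (op U)) := by
  intro b c hbc
  have hlocal : ∀ x : U, ∃ (W : Opens X) (hWU : W ≤ U), x.1 ∈ W ∧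
      ∃ t : F.1.obj (op W), ∀ p (hp : p ∈ W),
        F.presheaf.germ W p hp t ^ 2 = F.presheaf.germ U p (hWU hp) b ∧
        F.presheaf.germ W p hp t ^ 3 = F.presheaf.germ U p (hWU hp) c := by
    rintro ⟨x, hx⟩
    obtain ⟨a, ha2, ha3⟩ := h x (F.presheaf.germ U x hx b) (F.presheaf.germ U x hx c)
      (by rw [← map_pow, ← map_pow, hbc])
    obtain ⟨V, -, hxV, s, rfl⟩ := F.presheaf.exists_le_germ_eq a hx
    rw [← map_pow] at ha2 ha3
    obtain ⟨W₂, hW₂V, hW₂U, hxW₂, hW₂⟩ := exists_forall_germ_eq_of_germ_eq _ hxV hx ha2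
    obtain ⟨W₃, hW₃V, hW₃U, hxW₃, hW₃⟩ := exists_forall_germ_eq_of_germ_eq _ hxV hx ha3
    refine ⟨W₂ ⊓ W₃, inf_le_left.trans hW₂U, ⟨hxW₂, hxW₃⟩,
      F.1.map (homOfLE (inf_le_left.trans hW₂V)).op s, fun p hp => ?_⟩
    rw [F.presheaf.germ_res_apply, ← map_pow, ← map_pow]
    exact ⟨hW₂ p hp.1, hW₃ p hp.2⟩
  choose W hWU hxW t ht using hlocal
  obtain ⟨a, ha⟩ := exists_gluing_of_germ_eq F (fun i => homOfLE (hWU i))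
    (fun x hx => Opens.mem_iSup.mpr ⟨⟨x, hx⟩, hxW _⟩) t fun i j p hi hj =>
      eq_of_sq_eq_of_pow_three_eq ((ht i p hi).1.trans (ht j p hj).1.symm)
        ((ht i p hi).2.trans (ht j p hj).2.symm)
  refine ⟨a, section_ext F U _ _ fun p hp => ?_, section_ext F U _ _ fun p hp => ?_⟩
  · rw [map_pow, ha ⟨p, hp⟩ p (hxW _), (ht _ p _).1]
  · rw [map_pow, ha ⟨p, hp⟩ p (hxW _), (ht _ p _).2]

end TopCat.Presheaf

theorem seminormal_of_contraction_general
    {X Y : AlgebraicGeometry.Scheme.{u}}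
    [IsReduced Y]
    (f : Y ⟶ X)
    (hc : ∀ U : X.Opens, IsIso (f.app U))
    (hY : Scheme.IsSeminormal Y) :
    Scheme.IsSeminormal X := by
  intro x
  refine TopCat.Presheaf.isSeminormalRing_stalk_of_forall_obj X.presheaf x fun U _ => ?_
  have := hc U
  have (y : Y) : _root_.IsReduced (Y.sheaf.presheaf.stalk y) := isReduced_stalk_of_isReduced Y y
  exact (TopCat.Presheaf.isSeminormalRing_obj_of_forall_stalk Y.sheaf hY _).of_ringEquiv
    (asIso (f.app U)).commRingCatIsoToRingEquiv

/-- Let `f : Y → X` be a contraction (`O_X → f_*O_Y` an isomorphism) of varieties over a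
field `k` (reduced schemes of finite type over `k`).  If `Y` is seminormal, then `X` is
seminormal. -/
theorem seminormal_of_contraction (k : Type u) [Field k]
    {X Y : AlgebraicGeometry.Scheme.{u}}
    (πX : X ⟶ Spec (CommRingCat.of k)) (πY : Y ⟶ Spec (CommRingCat.of k))
    [IsReduced X] [IsReduced Y] [LocallyOfFiniteType πX] [LocallyOfFiniteType πY]
    [QuasiCompact πX] [QuasiCompact πY]
    (f : Y ⟶ X) (hover : f ≫ πX = πY)
    (hc : ∀ U : X.Opens, IsIso (f.app U))
    (hY : Scheme.IsSeminormal Y) :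
    Scheme.IsSeminormal X :=
  seminormal_of_contraction_general f hc hY
end

section
/- Let A be a reduced Noetherian ring that satisfies Serre's condition S2 (is S2-saturated). Then A is seminormal if and only if the localization A_p is seminormal for every prime p of height 1. -/
/-- The height of a prime ideal, as the height of the corresponding point of the prime
spectrum. -/
noncomputable def primeHeight {A : Type*} [CommRing A] (p : Ideal A) (hp : p.IsPrime) :
    ℕ∞ :=
  Order.height (⟨p, hp⟩ : PrimeSpectrum A)

/-- Serre's condition `S2`: for every prime `p`, `depth (A_p) ≥ min (2, ht p)`, expressed
by the existence of a weakly regular sequence in the maximal ideal of `A_p` of length at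
least `min (2, ht p)`. -/
def SerreS2 (A : Type*) [CommRing A] : Prop :=
  ∀ (p : Ideal A) (hp : p.IsPrime),
    ∃ rs : List (Localization.AtPrime p),
      (∀ r ∈ rs, r ∈ IsLocalRing.maximalIdeal (Localization.AtPrime p)) ∧
      RingTheory.Sequence.IsWeaklyRegular (Localization.AtPrime p) rs ∧
      min 2 (primeHeight p hp) ≤ (rs.length : ℕ∞)

/-! For `b³ = c²`, the `s` such that `(s²b, s³c)` has a root form an ideal `I` (the
denominators of the would-be root `c / b`); `(b, c)` has a root iff `I = ⊤`, and a root in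
`A_q` produces an element of `I` outside `q`. So it suffices to find a root in `A_q` for every
prime `q` minimal over `I`. If `ht q = 0`, `A_q` is a field; if `ht q = 1`, this is the
hypothesis; if `ht q ≥ 2`, the maximal ideal of `A_q` is the radical of `I A_q` and by `S2`
contains a regular pair, which forces a root. Seminormality passes to localizations, which
gives the converse. -/

theorem eq_of_sq_eq_of_cube_eq {R : Type*} [CommRing R] [IsReduced R] {a a' : R}
    (h2 : a ^ 2 = a' ^ 2) (h3 : a ^ 3 = a' ^ 3) : a = a' := by
  have h : (a - a') ^ 3 = 0 := by linear_combination 4 * h3 - (3 * a + 3 * a') * h2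
  exact sub_eq_zero.mp (IsNilpotent.eq_zero ⟨3, h⟩)

theorem IsSeminormalRing.of_isField {K : Type*} [CommRing K] (hK : IsField K) :
    IsSeminormalRing K := by
  intro b c hbc
  by_cases hb : b = 0
  · have := hK.isDomain
    have hc : c = 0 := pow_eq_zero_iff two_ne_zero |>.mp (by rw [← hbc, hb]; ring)
    exact ⟨0, by rw [hb]; ring, by rw [hc]; ring⟩
  · obtain ⟨u, hu⟩ := hK.mul_inv_cancel hb
    refine ⟨c * u, ?_, ?_⟩
    · linear_combination (u ^ 2) * hbc.symm + (b * (b * u + 1)) * hu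
    · linear_combination (c * u ^ 3) * hbc.symm + (c * (b ^ 2 * u ^ 2 + b * u + 1)) * hu

theorem IsSeminormalRing.localization {A : Type*} [CommRing A] (h : IsSeminormalRing A)
    (M : Submonoid A) : IsSeminormalRing (Localization M) := by
  intro x y hxy
  obtain ⟨b, s, rfl⟩ : ∃ (b : A) (s : M), Localization.mk b s = x :=
    Localization.induction_on x fun z => ⟨z.1, z.2, rfl⟩
  obtain ⟨c, t, rfl⟩ : ∃ (c : A) (t : M), Localization.mk c t = y :=
    Localization.induction_on y fun z => ⟨z.1, z.2, rfl⟩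
  rw [Localization.mk_pow, Localization.mk_pow, Localization.mk_eq_mk_iff,
    Localization.r_iff_exists] at hxy
  obtain ⟨u, hu⟩ := hxy
  simp only [SubmonoidClass.coe_pow] at hu
  -- the root is `a / (s t u)`, for a root `a` of the equation with denominators cleared
  obtain ⟨a, ha2, ha3⟩ := h (b * s * t ^ 2 * u ^ 2) (c * s ^ 3 * t ^ 2 * u ^ 3)
    (by linear_combination ((s : A) ^ 3 * (t : A) ^ 4 * (u : A) ^ 5) * hu)
  refine ⟨Localization.mk a (s * t * u), ?_, ?_⟩ <;>
    rw [Localization.mk_pow, Localization.mk_eq_mk_iff, Localization.r_iff_exists] <;>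
    refine ⟨1, ?_⟩ <;>
    simp only [OneMemClass.coe_one, one_mul, SubmonoidClass.coe_pow, Submonoid.coe_mul]
  · linear_combination (s : A) * ha2
  · linear_combination (t : A) * ha3

section sqCubeIdeal

variable {R : Type*} [CommRing R] [IsReduced R]

def sqCubeIdeal (b c : R) (hbc : b ^ 3 = c ^ 2) : Ideal R where
  carrier := {s | ∃ α, α ^ 2 = s ^ 2 * b ∧ α ^ 3 = s ^ 3 * c}
  zero_mem' := ⟨0, by ring, by ring⟩
  add_mem' := by
    rintro s t ⟨α, hα2, hα3⟩ ⟨β, hβ2, hβ3⟩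
    have hαb : α * b = s * c := eq_of_sq_eq_of_cube_eq
      (by linear_combination b ^ 2 * hα2 + s ^ 2 * hbc)
      (by linear_combination b ^ 3 * hα3 + s ^ 3 * c * hbc)
    have hβb : β * b = t * c := eq_of_sq_eq_of_cube_eq
      (by linear_combination b ^ 2 * hβ2 + t ^ 2 * hbc)
      (by linear_combination b ^ 3 * hβ3 + t ^ 3 * c * hbc)
    have hαβ : α * β = s * t * b := eq_of_sq_eq_of_cube_eq
      (by linear_combination β ^ 2 * hα2 + s ^ 2 * b * hβ2)
      (by linear_combination β ^ 3 * hα3 + s ^ 3 * c * hβ3 - s ^ 3 * t ^ 3 * hbc)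
    exact ⟨α + β, by linear_combination hα2 + hβ2 + 2 * hαβ,
      by linear_combination hα3 + hβ3 + (3 * α + 3 * β) * hαβ + 3 * s * t * hαb +
        3 * s * t * hβb⟩
  smul_mem' := by
    rintro t s ⟨α, h2, h3⟩
    exact ⟨t * α, by rw [smul_eq_mul]; linear_combination t ^ 2 * h2,
      by rw [smul_eq_mul]; linear_combination t ^ 3 * h3⟩

variable {b c : R} {hbc : b ^ 3 = c ^ 2}

theorem mem_sqCubeIdeal {s : R} :
    s ∈ sqCubeIdeal b c hbc ↔ ∃ α, α ^ 2 = s ^ 2 * b ∧ α ^ 3 = s ^ 3 * c := Iff.rfl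

theorem one_mem_sqCubeIdeal_iff :
    1 ∈ sqCubeIdeal b c hbc ↔ ∃ a, a ^ 2 = b ∧ a ^ 3 = c := by
  simp only [mem_sqCubeIdeal, one_pow, one_mul]

theorem map_sqCubeIdeal_le {S : Type*} [CommRing S] [IsReduced S] (f : R →+* S) :
    (sqCubeIdeal b c hbc).map f ≤
      sqCubeIdeal (f b) (f c) (by rw [← map_pow, ← map_pow, hbc]) := by
  refine Ideal.map_le_iff_le_comap.mpr fun s ⟨α, h2, h3⟩ => ⟨f α, ?_, ?_⟩
  · rw [← map_pow, h2, map_mul, map_pow]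
  · rw [← map_pow, h3, map_mul, map_pow]

theorem exists_mem_sqCubeIdeal_of_localization (M : Submonoid R) (a : Localization M)
    (ha2 : a ^ 2 = algebraMap R (Localization M) b)
    (ha3 : a ^ 3 = algebraMap R (Localization M) c) :
    ∃ s ∈ M, s ∈ sqCubeIdeal b c hbc := by
  obtain ⟨α, s, rfl⟩ : ∃ (α : R) (s : M), Localization.mk α s = a :=
    Localization.induction_on a fun y => ⟨y.1, y.2, rfl⟩
  rw [Localization.mk_pow, ← Localization.mk_one_eq_algebraMap, Localization.mk_eq_mk_iff,
    Localization.r_iff_exists] at ha2 ha3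
  obtain ⟨u, hu⟩ := ha2
  obtain ⟨v, hv⟩ := ha3
  simp only [OneMemClass.coe_one, one_mul, SubmonoidClass.coe_pow] at hu hv
  refine ⟨s * u * v, mul_mem (mul_mem s.2 u.2) v.2, α * u * v, ?_, ?_⟩
  · linear_combination ((u : R) * (v : R) ^ 2) * hu
  · linear_combination ((u : R) ^ 3 * (v : R) ^ 2) * hv

theorem exists_sq_eq_cube_eq_of_forall_minimalPrimes
    (h : ∀ (q : Ideal R) [q.IsPrime], q ∈ (sqCubeIdeal b c hbc).minimalPrimes →
      ∃ a : Localization.AtPrime q, a ^ 2 = algebraMap R _ b ∧ a ^ 3 = algebraMap R _ c) :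
    ∃ a, a ^ 2 = b ∧ a ^ 3 = c := by
  rw [← one_mem_sqCubeIdeal_iff (hbc := hbc), ← Ideal.eq_top_iff_one]
  by_contra hne
  obtain ⟨m, hm, hIm⟩ := Ideal.exists_le_maximal _ hne
  obtain ⟨q, hq, -⟩ := Ideal.exists_minimalPrimes_le (J := m) hIm
  have := hq.isPrime
  obtain ⟨a, ha2, ha3⟩ := h q hq
  obtain ⟨s, hsq, hs⟩ := exists_mem_sqCubeIdeal_of_localization q.primeCompl a ha2 ha3
  exact hsq (hq.le hs)

end sqCubeIdeal

section RegularPair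

variable {R : Type*} [CommRing R] {x y : R}

theorem isSMulRegular_quotSMulTop_iff_dvd :
    IsSMulRegular (QuotSMulTop x R) y ↔ ∀ z, x ∣ y * z → x ∣ z := by
  simp only [QuotSMulTop, isSMulRegular_quotient_iff_mem_of_smul_mem,
    Submodule.mem_smul_pointwise_iff_exists, Submodule.mem_top, true_and, smul_eq_mul,
    Dvd.dvd, eq_comm]

theorem dvd_of_dvd_pow_mul (hy : ∀ z, x ∣ y * z → x ∣ z) (n : ℕ) {z : R}
    (h : x ∣ y ^ n * z) : x ∣ z := by
  induction n generalizing z with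
  | zero => simpa using h
  | succ n ih => exact hy z (ih (by rwa [← mul_assoc, ← pow_succ]))

theorem pow_dvd_of_pow_dvd_mul (hx : IsSMulRegular R x) (hy : ∀ z, x ∣ y * z → x ∣ z)
    (n : ℕ) {z : R} (h : x ^ n ∣ y * z) : x ^ n ∣ z := by
  induction n generalizing z with
  | zero => simp
  | succ n ih =>
    obtain ⟨z₁, rfl⟩ := hy z (dvd_trans (dvd_pow_self x n.succ_ne_zero) h)
    obtain ⟨w, hw⟩ := h
    have : y * z₁ = x ^ n * w := hx (by simp only [smul_eq_mul]; linear_combination hw)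
    rw [pow_succ']
    exact mul_dvd_mul_left x (ih ⟨w, this⟩)

/-- A regular pair `x, y` in the radical of `sqCubeIdeal b c` forces a root: powers
`x', y'` lie in the ideal, the corresponding numerators satisfy `α y' = β x'`, and regularity
of `y'` modulo `x'` makes `α / x'` a root in `R`. -/
theorem exists_sq_eq_cube_eq_of_isSMulRegular [IsReduced R] {b c : R} (hbc : b ^ 3 = c ^ 2)
    (hx : IsSMulRegular R x) (hy : IsSMulRegular (QuotSMulTop x R) y)
    (hxI : x ∈ (sqCubeIdeal b c hbc).radical) (hyI : y ∈ (sqCubeIdeal b c hbc).radical) :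
    ∃ a, a ^ 2 = b ∧ a ^ 3 = c := by
  rw [isSMulRegular_quotSMulTop_iff_dvd] at hy
  obtain ⟨m, α, hα2, hα3⟩ := hxI
  obtain ⟨n, β, hβ2, hβ3⟩ := hyI
  have hαβ : α * y ^ n = β * x ^ m := eq_of_sq_eq_of_cube_eq
    (by linear_combination (y ^ n) ^ 2 * hα2 - (x ^ m) ^ 2 * hβ2)
    (by linear_combination (y ^ n) ^ 3 * hα3 - (x ^ m) ^ 3 * hβ3)
  obtain ⟨a, rfl⟩ : x ^ m ∣ α := pow_dvd_of_pow_dvd_mul hx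
    (fun z hz => dvd_of_dvd_pow_mul hy n hz) m ⟨β, by linear_combination hαβ⟩
  refine ⟨a, (hx.pow (m * 2)) ?_, (hx.pow (m * 3)) ?_⟩
  · simp only [smul_eq_mul]; linear_combination hα2
  · simp only [smul_eq_mul]; linear_combination hα3

end RegularPair

theorem primeHeight_eq_height {A : Type*} [CommRing A] (p : Ideal A) (hp : p.IsPrime) :
    primeHeight p hp = p.height :=
  (PrimeSpectrum.height_eq_orderHeight ⟨p, hp⟩).symm

theorem SerreS2.exists_isWeaklyRegular_cons_cons {A : Type*} [CommRing A] (hS2 : SerreS2 A)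
    (p : Ideal A) (hp : p.IsPrime) (h2 : 2 ≤ primeHeight p hp) :
    ∃ (x y : Localization.AtPrime p) (rs : List (Localization.AtPrime p)),
      x ∈ IsLocalRing.maximalIdeal _ ∧ y ∈ IsLocalRing.maximalIdeal _ ∧
      RingTheory.Sequence.IsWeaklyRegular (Localization.AtPrime p) (x :: y :: rs) := by
  obtain ⟨rs, hmem, hreg, hlen⟩ := hS2 p hp
  rw [min_eq_left h2] at hlen
  match rs, hlen with
  | x :: y :: rs, _ => exact ⟨x, y, rs, hmem x (by simp), hmem y (by simp), hreg⟩
  | [], h => simp at h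
  | [_], h => simp at h

theorem isSeminormalRing_iff_of_S2_general (A : Type*) [CommRing A]
    [IsReduced A] (hS2 : SerreS2 A) :
    IsSeminormalRing A ↔
      ∀ (p : Ideal A) (hp : p.IsPrime), primeHeight p hp = 1 →
        IsSeminormalRing (Localization.AtPrime p) := by
  refine ⟨fun h p _ _ => h.localization p.primeCompl, fun hloc b c hbc => ?_⟩
  refine exists_sq_eq_cube_eq_of_forall_minimalPrimes (hbc := hbc) fun q hq hqI => ?_
  have hbc' := congrArg (algebraMap A (Localization.AtPrime q)) hbc
  simp only [map_pow] at hbc'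
  rcases le_or_gt 2 (primeHeight q hq) with h2 | h1
  · obtain ⟨x, y, rs, hx, hy, hreg⟩ := hS2.exists_isWeaklyRegular_cons_cons q hq h2
    rw [RingTheory.Sequence.isWeaklyRegular_cons_iff,
      RingTheory.Sequence.isWeaklyRegular_cons_iff] at hreg
    have hrad : IsLocalRing.maximalIdeal _ ≤ (sqCubeIdeal _ _ hbc').radical := by
      rw [← Localization.AtPrime.map_eq_maximalIdeal,
        ← IsLocalization.AtPrime.radical_map_of_mem_minimalPrimes _ q _ hqI]
      exact Ideal.radical_mono (map_sqCubeIdeal_le _)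
    exact exists_sq_eq_cube_eq_of_isSMulRegular hbc' hreg.1 hreg.2.1 (hrad hx) (hrad hy)
  rcases Order.le_one_iff.mp (ENat.lt_two_iff.mp h1) with h0 | h1
  · rw [primeHeight_eq_height, Ideal.height_eq_zero_iff] at h0
    have := Ring.KrullDimLE.of_isLocalization q h0 (Localization.AtPrime q)
    exact IsSeminormalRing.of_isField Ring.KrullDimLE.isField_of_isReduced _ _ hbc'
  · exact hloc q hq h1 _ _ hbc'

/-- Greco–Traverso criterion: a reduced Noetherian ring `A` satisfying Serre's condition
`S2` is seminormal if and only if its localization at every height-one prime is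
seminormal. -/
theorem isSeminormalRing_iff_of_S2 (A : Type*) [CommRing A] [IsNoetherianRing A]
    [IsReduced A] (hS2 : SerreS2 A) :
    IsSeminormalRing A ↔
      ∀ (p : Ideal A) (hp : p.IsPrime), primeHeight p hp = 1 →
        IsSeminormalRing (Localization.AtPrime p) :=
  isSeminormalRing_iff_of_S2_general A hS2
end

section
/- Let A ⊆ B be an integral extension of reduced rings with B contained in the total quotient ring of A. Define A' = {b ∈ B : for every prime p of A, the image of b in B_p lies in A_p + Rad(B_p)} (where Rad denotes the Jacobson radical). Then A' is a subring of B containing A, and the inclusion A → A' induces a bijection on prime spectra with trivial residue field extensions. -/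
open scoped nonZeroDivisors

/-- The localization `B_p` of `B` at (the image of) the complement of a prime `p ⊆ A`. -/
abbrev LocAway {A : Type} (B : Type) [CommRing A] [CommRing B] [Algebra A B]
    (p : Ideal A) [p.IsPrime] : Type :=
  Localization (Algebra.algebraMapSubmonoid B p.primeCompl)

/-- The candidate seminormalization: elements `b ∈ B` whose image in `B_p` lies in
`A_p + Rad(B_p)` for every prime `p` of `A`, i.e. there are `a, s ∈ A`, `s ∉ p`, with
`s·b − a` mapping into the Jacobson radical of `B_p` (so that `b − a/s ∈ Rad(B_p)`,
`s` being invertible in `B_p`). -/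
def snSet (A B : Type) [CommRing A] [CommRing B] [Algebra A B] : Set B :=
  {b : B | ∀ (p : Ideal A) (_ : p.IsPrime), ∃ a s : A, s ∉ p ∧
    algebraMap B (LocAway B p) (algebraMap A B s * b - algebraMap A B a) ∈
      (⊥ : Ideal (LocAway B p)).jacobson}

section Aux

variable {A B : Type} [CommRing A] [CommRing B] [Algebra A B]

lemma subtype_comp_eq (S : Subring B) (φ : A →+* S)
    (hφ : ∀ a : A, (φ a : B) = algebraMap A B a) :
    S.subtype.comp φ = algebraMap A B :=
  RingHom.ext hφ

lemma int_S_B (hint : Algebra.IsIntegral A B) (S : Subring B) (φ : A →+* S)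
    (hφ : ∀ a : A, (φ a : B) = algebraMap A B a) :
    S.subtype.IsIntegral := by
  intro b
  obtain ⟨P, hm, he⟩ := hint.isIntegral b
  refine ⟨P.map φ, hm.map φ, ?_⟩
  rw [Polynomial.eval₂_map, subtype_comp_eq S φ hφ]
  exact he

lemma int_A_S (hint : Algebra.IsIntegral A B) (S : Subring B) (φ : A →+* S)
    (hφ : ∀ a : A, (φ a : B) = algebraMap A B a) :
    φ.IsIntegral := by
  intro x
  obtain ⟨P, hm, he⟩ := hint.isIntegral (x : B)
  refine ⟨P, hm, ?_⟩
  have : S.subtype (P.eval₂ φ x) = S.subtype 0 := by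
    rw [Polynomial.hom_eval₂, subtype_comp_eq S φ hφ, map_zero]
    exact he
  exact Subtype.coe_injective this

/-- Key lemma: if `q ⊆ S` is a prime lying over `p ⊆ A` and `(a, s)` is a witness
for `b` at `p` (i.e. `s·b − a` maps into `Rad(B_p)`), then `φ s · b − φ a ∈ q`. -/
lemma key_lemma (hint : Algebra.IsIntegral A B) (S : Subring B) (φ : A →+* S)
    (hφ : ∀ a : A, (φ a : B) = algebraMap A B a)
    (p : Ideal A) [hp : p.IsPrime] (q : Ideal S) [hq : q.IsPrime]
    (hpq : q.comap φ = p) (b : S) (a s : A)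
    (hx : algebraMap B (LocAway B p) (algebraMap A B s * (b : B) - algebraMap A B a) ∈
      (⊥ : Ideal (LocAway B p)).jacobson) :
    φ s * b - φ a ∈ q := by
  letI : Algebra S B := S.subtype.toAlgebra
  haveI : Algebra.IsIntegral S B := ⟨int_S_B hint S φ hφ⟩
  have hbot : (⊥ : Ideal B).comap (algebraMap S B) ≤ q := by
    intro x hxx
    have : (x : B) = 0 := hxx
    have hx0 : x = 0 := Subtype.coe_injective this
    rw [hx0]; exact q.zero_mem
  obtain ⟨Q, hQ_ge, hQprime, hQcomap⟩ :=
    Ideal.exists_ideal_over_prime_of_isIntegral q ⊥ hbot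
  have hcomap' : Q.comap S.subtype = q := hQcomap
  have hQA : Q.comap (algebraMap A B) = p := by
    rw [← subtype_comp_eq S φ hφ, ← Ideal.comap_comap, hcomap', hpq]
  set M := Algebra.algebraMapSubmonoid B p.primeCompl with hM
  set f := algebraMap B (LocAway B p) with hf
  have hdisj : Disjoint (M : Set B) (Q : Set B) := by
    rw [Set.disjoint_left]
    rintro _ ⟨t, ht, rfl⟩ hQt
    exact ht (show t ∈ p from hQA ▸ Ideal.mem_comap.mpr hQt)
  have hQp : (Q.map f).IsPrime :=
    IsLocalization.isPrime_of_isPrime_disjoint M (LocAway B p) Q hQprime hdisj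
  obtain ⟨m, hm, hQpm⟩ := Ideal.exists_le_maximal _ hQp.ne_top
  have hjac : ((⊥ : Ideal (LocAway B p)).jacobson : Ideal (LocAway B p)) ≤ m :=
    sInf_le ⟨bot_le, hm⟩
  have hxm : f (algebraMap A B s * (b : B) - algebraMap A B a) ∈ m := hjac hx
  set Q' : Ideal B := m.comap f with hQ'
  have hQ'prime : Q'.IsPrime := hm.isPrime.comap f
  have hxQ' : algebraMap A B s * (b : B) - algebraMap A B a ∈ Q' := hxm
  have hQQ' : Q ≤ Q' := le_trans Ideal.le_comap_map (Ideal.comap_mono hQpm)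
  have hQ'disj : ∀ t : A, t ∉ p → algebraMap A B t ∉ Q' := by
    intro t ht htm
    have hunit : IsUnit (f (algebraMap A B t)) :=
      IsLocalization.map_units (LocAway B p) (⟨algebraMap A B t, ⟨t, ht, rfl⟩⟩ : M)
    exact hm.ne_top (m.eq_top_of_isUnit_mem htm hunit)
  have hQ'A : Q'.comap (algebraMap A B) = p := by
    apply le_antisymm
    · intro t ht
      by_contra h
      exact hQ'disj t h ht
    · rw [← hQA]
      exact Ideal.comap_mono hQQ'
  set q' : Ideal S := Q'.comap S.subtype with hq'def
  haveI hq'prime : q'.IsPrime := hQ'prime.comap S.subtype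
  have hqq' : q ≤ q' := hcomap' ▸ Ideal.comap_mono hQQ'
  have hq'φ : q'.comap φ = p := by
    rw [hq'def, Ideal.comap_comap, subtype_comp_eq S φ hφ, hQ'A]
  have hqeq : q = q' := by
    by_contra hne
    have hlt : q < q' := lt_of_le_of_ne hqq' hne
    obtain ⟨x0, hx0q', hx0q⟩ := SetLike.exists_of_lt hlt
    letI : Algebra A S := φ.toAlgebra
    have hint' : IsIntegral A x0 := int_A_S hint S φ hφ x0
    have hcontra := Ideal.comap_lt_comap_of_integral_mem_sdiff (I := q) (J := q')
      hqq' ⟨hx0q', hx0q⟩ hint'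
    have : p < p := by
      have h1 : q.comap (algebraMap A S) = p := hpq
      have h2 : q'.comap (algebraMap A S) = p := hq'φ
      rwa [h1, h2] at hcontra
    exact lt_irrefl p this
  rw [hqeq, hq'def]
  show ((φ s * b - φ a : S) : B) ∈ Q'
  have hcoe : ((φ s * b - φ a : S) : B) = algebraMap A B s * (b : B) - algebraMap A B a := by
    push_cast
    rw [hφ s, hφ a]
  rw [hcoe]
  exact hxQ'

end Aux

/-- Construction of the seminormalization (paper's appendix, affine case).  Let `A ⊆ B`
be an integral extension of reduced rings with `B` contained in the total quotient ring
of `A` (every `b ∈ B` is a fraction `r/s` with `s` a non-zero-divisor of `A`).  Then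
`A' = {b ∈ B : ∀ p, b_p ∈ A_p + Rad(B_p)}` is a subring of `B` containing `A`, and
`Spec A' → Spec A` is bijective with trivial residue field extensions (every element of
`A'/q` is a fraction `a/s` of elements of `A` modulo `q`, for each prime `q` of `A'`). -/
theorem seminormalization_construction (A B : Type) [CommRing A] [CommRing B] [Algebra A B]
    [IsReduced A] [IsReduced B]
    (hinj : Function.Injective (algebraMap A B))
    (hint : Algebra.IsIntegral A B)
    (hfrac : ∀ b : B, ∃ (r s : A), s ∈ A⁰ ∧ s • b = algebraMap A B r) :
    ∃ S : Subring B,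
      (S : Set B) = snSet A B ∧
      Set.range (algebraMap A B) ⊆ (S : Set B) ∧
      ∀ φ : A →+* S, (∀ a : A, (φ a : B) = algebraMap A B a) →
        Function.Bijective (fun q : PrimeSpectrum S => (PrimeSpectrum.comap φ) q) ∧
        ∀ (q : Ideal S) (_ : q.IsPrime) (b : S),
          ∃ a s : A, φ s ∉ q ∧ φ s * b - φ a ∈ q := by
  classical
  have hone : (1 : B) ∈ snSet A B := by
    intro p hp
    refine ⟨1, 1, fun h => hp.ne_top ((Ideal.eq_top_iff_one p).mpr h), ?_⟩
    simp
  have hzero : (0 : B) ∈ snSet A B := by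
    intro p hp
    refine ⟨0, 1, fun h => hp.ne_top ((Ideal.eq_top_iff_one p).mpr h), ?_⟩
    simp
  have hmul : ∀ {x y : B}, x ∈ snSet A B → y ∈ snSet A B → x * y ∈ snSet A B := by
    intro x y hx hy p hp
    obtain ⟨a1, s1, hs1, h1⟩ := hx p hp
    obtain ⟨a2, s2, hs2, h2⟩ := hy p hp
    refine ⟨a1 * a2, s1 * s2, fun h => (hp.mem_or_mem h).elim hs1 hs2, ?_⟩
    have key : algebraMap A B (s1 * s2) * (x * y) - algebraMap A B (a1 * a2) =
        (algebraMap A B s1 * x - algebraMap A B a1) * (algebraMap A B s2 * y) +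
        algebraMap A B a1 * (algebraMap A B s2 * y - algebraMap A B a2) := by
      rw [map_mul, map_mul]; ring
    rw [key]; simp only [map_add, map_mul]
    exact Ideal.add_mem _ (Ideal.mul_mem_right _ _ h1) (Ideal.mul_mem_left _ _ h2)
  have hadd : ∀ {x y : B}, x ∈ snSet A B → y ∈ snSet A B → x + y ∈ snSet A B := by
    intro x y hx hy p hp
    obtain ⟨a1, s1, hs1, h1⟩ := hx p hp
    obtain ⟨a2, s2, hs2, h2⟩ := hy p hp
    refine ⟨s2 * a1 + s1 * a2, s1 * s2, fun h => (hp.mem_or_mem h).elim hs1 hs2, ?_⟩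
    have key : algebraMap A B (s1 * s2) * (x + y) - algebraMap A B (s2 * a1 + s1 * a2) =
        algebraMap A B s2 * (algebraMap A B s1 * x - algebraMap A B a1) +
        algebraMap A B s1 * (algebraMap A B s2 * y - algebraMap A B a2) := by
      rw [map_mul, map_add, map_mul, map_mul]; ring
    rw [key]; simp only [map_add, map_mul]
    exact Ideal.add_mem _ (Ideal.mul_mem_left _ _ h1) (Ideal.mul_mem_left _ _ h2)
  have hneg : ∀ {x : B}, x ∈ snSet A B → -x ∈ snSet A B := by
    intro x hx p hp
    obtain ⟨a, s, hs, h⟩ := hx p hp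
    refine ⟨-a, s, hs, ?_⟩
    have key : algebraMap A B s * -x - algebraMap A B (-a) =
        -(algebraMap A B s * x - algebraMap A B a) := by
      rw [map_neg]; ring
    rw [key, map_neg]
    exact Submodule.neg_mem _ h
  have hrange : ∀ a : A, algebraMap A B a ∈ snSet A B := by
    intro a p hp
    refine ⟨a, 1, fun h => hp.ne_top ((Ideal.eq_top_iff_one p).mpr h), ?_⟩
    simp
  have main : ∀ (S : Subring B), (↑S : Set B) = snSet A B →
      ∀ φ : A →+* S, (∀ a : A, (φ a : B) = algebraMap A B a) →
        Function.Bijective (fun q : PrimeSpectrum S => (PrimeSpectrum.comap φ) q) ∧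
        ∀ (q : Ideal S) (_ : q.IsPrime) (b : S),
          ∃ a s : A, φ s ∉ q ∧ φ s * b - φ a ∈ q := by
    intro S hS φ hφ
    have hmem : ∀ b : S, (b : B) ∈ snSet A B := by
      intro b
      rw [← hS]
      exact b.2
    have hle : ∀ (q q' : Ideal S), q.IsPrime → q'.IsPrime →
        q.comap φ = q'.comap φ → q ≤ q' := by
      intro q q' hq hq' hcomap b hb
      haveI := hq; haveI := hq'
      obtain ⟨a, s, hs, hx⟩ := hmem b (q.comap φ) inferInstance
      have h1 : φ s * b - φ a ∈ q := key_lemma hint S φ hφ (q.comap φ) q rfl b a s hx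
      have h2 : φ s * b - φ a ∈ q' := key_lemma hint S φ hφ (q.comap φ) q'
        hcomap.symm b a s hx
      have hsb : φ s * b ∈ q := q.mul_mem_left _ hb
      have hφa : φ a ∈ q := by
        have he : φ a = φ s * b - (φ s * b - φ a) := by ring
        rw [he]; exact q.sub_mem hsb h1
      have hφa' : φ a ∈ q' := by
        have h3 : a ∈ q'.comap φ := by rw [← hcomap]; exact Ideal.mem_comap.mpr hφa
        exact Ideal.mem_comap.mp h3
      have hsb' : φ s * b ∈ q' := by
        have he : φ s * b = (φ s * b - φ a) + φ a := by ring
        rw [he]; exact q'.add_mem h2 hφa'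
      rcases hq'.mem_or_mem hsb' with h | h
      · exact absurd (show s ∈ q.comap φ by rw [hcomap]; exact Ideal.mem_comap.mpr h) hs
      · exact h
    refine ⟨⟨?_, ?_⟩, ?_⟩
    · -- injectivity of the Spec map
      intro q1 q2 h
      have hc : q1.asIdeal.comap φ = q2.asIdeal.comap φ := by
        have := congrArg PrimeSpectrum.asIdeal h
        simpa [PrimeSpectrum.comap_asIdeal] using this
      exact PrimeSpectrum.ext
        (le_antisymm (hle _ _ q1.2 q2.2 hc) (hle _ _ q2.2 q1.2 hc.symm))
    · -- surjectivity of the Spec map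
      intro P
      letI : Algebra A S := φ.toAlgebra
      haveI : Algebra.IsIntegral A S := ⟨int_A_S hint S φ hφ⟩
      haveI := P.2
      have hbot : (⊥ : Ideal S).comap (algebraMap A S) ≤ P.asIdeal := by
        intro a ha
        have h0 : φ a = 0 := ha
        have h1 : algebraMap A B a = 0 := by rw [← hφ a, h0]; simp
        have h2 : a = 0 := hinj (by simpa using h1)
        rw [h2]; exact P.asIdeal.zero_mem
      obtain ⟨Q, -, hQp, hQc⟩ := Ideal.exists_ideal_over_prime_of_isIntegral P.asIdeal ⊥ hbot
      haveI := hQp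
      exact ⟨⟨Q, hQp⟩, PrimeSpectrum.ext hQc⟩
    · -- trivial residue field extensions
      intro q hq b
      haveI := hq
      obtain ⟨a, s, hs, hx⟩ := hmem b (q.comap φ) inferInstance
      exact ⟨a, s, fun h => hs (Ideal.mem_comap.mpr h),
        key_lemma hint S φ hφ (q.comap φ) q rfl b a s hx⟩
  refine ⟨{ carrier := snSet A B
            one_mem' := hone
            mul_mem' := hmul
            zero_mem' := hzero
            add_mem' := hadd
            neg_mem' := hneg }, rfl, ?_, ?_⟩
  · rintro _ ⟨a, rfl⟩
    exact hrange a
  · exact main _ rfl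
end
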